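/- arXiv:1403.0934 — 8 statements merged into one kernel-verified Lean document; each statement's English description precedes it below -/
import Mathlib

section
/- Let G be a torsion-free abelian group, X a non-empty finite subset of G, and k, l non-zero integers with |k| ≠ |l|. Then |k·X + l·X| ≥ 3|X| − 2. -/
/-!
A torsion-free abelian group embeds into a linearly ordered one (its divisible hull is a
`ℚ`-vector space, ordered lexicographically in a basis), and an injective homomorphism preserves
`|k·X + l·X|`. So `G` may be taken linearly ordered and, by the symmetries `(k, l) ↦ (l, k)` and
`(k, l) ↦ (-k, -l)`, `k > |l|`. Let `a < a₂` be the two least and `b₁ < b` the two largest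
elements of `X`. Removing one extreme element of `X` loses at least three sums, so induction
gives `3|X| - 2`. For `l > 0` remove `a`: `ka + la`, `ka + la₂`, `ka₂ + la` all lie below
`ka₂ + la₂`. For `l < 0` and `b - b₁ ≤ a₂ - a` remove `a`: `ka + lb < ka + lb₁` lie below
`ka₂ + lb` (as `-l(b - b₁) < k(a₂ - a)`) and `kb + la` above `kb + la₂`; the case
`a₂ - a < b - b₁` is its mirror image under `x ↦ -x`.
-/

open Finset
open scoped Pointwise

universe u

theorem IsAddTorsionFree.exists_injective_addMonoidHom_linearOrder (G : Type u) [AddCommGroup G]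
    [IsAddTorsionFree G] :
    ∃ (H : Type u) (_ : AddCommGroup H) (_ : LinearOrder H) (_ : IsOrderedAddMonoid H)
      (φ : G →+ H), Function.Injective φ := by
  let ι := Module.Free.ChooseBasisIndex ℚ (DivisibleHull G)
  obtain ⟨_, -⟩ := exists_wellFoundedLT ι
  let e : DivisibleHull G ≃+ Lex (ι →₀ ℚ) :=
    (Module.Free.chooseBasis ℚ (DivisibleHull G)).repr.toAddEquiv.trans (toLexAddEquiv _)
  exact ⟨_, inferInstance, inferInstance, inferInstance,
    e.toAddMonoidHom.comp (DivisibleHull.coeAddMonoidHom G),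
    e.injective.comp DivisibleHull.coe_injective⟩

namespace Finset

theorem Nontrivial.exists_lt_forall_ne_le {α : Type*} [LinearOrder α] {s : Finset α}
    (hs : s.Nontrivial) : ∃ a ∈ s, ∃ a₂ ∈ s, a < a₂ ∧ ∀ x ∈ s, x ≠ a → a₂ ≤ x := by
  set a := s.min' hs.nonempty
  have ha₂ := (s.erase a).min'_mem hs.erase_nonempty
  refine ⟨a, s.min'_mem _, _, mem_of_mem_erase ha₂, ?_, ?_⟩
  · exact (s.min'_le _ (mem_of_mem_erase ha₂)).lt_of_ne (ne_of_mem_erase ha₂).symm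
  · exact fun x hx hxa => (s.erase a).min'_le x (mem_erase.2 ⟨hxa, hx⟩)

theorem neg_erase {α : Type*} [DecidableEq α] [InvolutiveNeg α] (s : Finset α) (a : α) :
    -s.erase a = (-s).erase (-a) := by
  ext
  simp [mem_neg', neg_eq_iff_eq_neg]

theorem card_add_three_le {α : Type*} [DecidableEq α] {s t : Finset α} (hst : s ⊆ t)
    {x y z : α} (hx : x ∈ t) (hy : y ∈ t) (hz : z ∈ t) (hxy : x ≠ y) (hxz : x ≠ z) (hyz : y ≠ z)
    (hxs : x ∉ s) (hys : y ∉ s) (hzs : z ∉ s) : #s + 3 ≤ #t := by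
  have hdisj : Disjoint {x, y, z} s := by simp [hxs, hys, hzs]
  calc #s + 3 = #({x, y, z} ∪ s) := by
        rw [card_union_of_disjoint hdisj, card_eq_three.2 ⟨x, y, z, hxy, hxz, hyz, rfl⟩, add_comm]
    _ ≤ #t := card_le_card (union_subset (by simp [insert_subset_iff, hx, hy, hz]) hst)

end Finset

section Dilates

variable {G : Type*} [AddCommGroup G] [DecidableEq G]

/-- `k·X + l·X`. -/
def dilateSum (k l : ℤ) (X : Finset G) : Finset G :=
  image₂ (fun x y => k • x + l • y) X X

variable {k l : ℤ} {X : Finset G}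

theorem mem_dilateSum {s : G} : s ∈ dilateSum k l X ↔ ∃ x ∈ X, ∃ y ∈ X, k • x + l • y = s :=
  mem_image₂

theorem smul_add_smul_mem_dilateSum {x y : G} (hx : x ∈ X) (hy : y ∈ X) :
    k • x + l • y ∈ dilateSum k l X :=
  mem_image₂_of_mem hx hy

theorem dilateSum_mono {Y : Finset G} (h : Y ⊆ X) : dilateSum k l Y ⊆ dilateSum k l X :=
  image₂_subset h h

theorem dilateSum_singleton (x : G) : dilateSum k l {x} = {k • x + l • x} :=
  image₂_singleton

theorem dilateSum_comm (k l : ℤ) (X : Finset G) : dilateSum k l X = dilateSum l k X :=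
  image₂_comm fun _ _ => add_comm _ _

theorem dilateSum_image {H : Type*} [AddCommGroup H] [DecidableEq H] (φ : G →+ H) (k l : ℤ)
    (X : Finset G) : dilateSum k l (X.image φ) = (dilateSum k l X).image φ := by
  simp only [dilateSum, image₂_image_left, image₂_image_right, image_image₂, map_add, map_zsmul]

theorem card_dilateSum_image {H : Type*} [AddCommGroup H] [DecidableEq H] {φ : G →+ H}
    (hφ : Function.Injective φ) (k l : ℤ) (X : Finset G) :
    #(dilateSum k l (X.image φ)) = #(dilateSum k l X) := by
  rw [dilateSum_image, card_image_of_injective _ hφ]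

theorem dilateSum_neg (k l : ℤ) (X : Finset G) : dilateSum k l (-X) = -dilateSum k l X := by
  simp only [dilateSum, ← image_neg_eq_neg, image₂_image_left, image₂_image_right, image_image₂,
    smul_neg, neg_add]

theorem dilateSum_neg_neg (k l : ℤ) (X : Finset G) :
    dilateSum (-k) (-l) X = -dilateSum k l X := by
  rw [← dilateSum_neg]
  simp only [dilateSum, ← image_neg_eq_neg, image₂_image_left, image₂_image_right, smul_neg,
    neg_zsmul]

end Dilates

section LinearOrder

variable {H : Type*} [AddCommGroup H] [LinearOrder H] [IsOrderedAddMonoid H] {k l : ℤ}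
  {X : Finset H}

theorem zsmul_le_zsmul_right_of_nonpos (hl : l ≤ 0) {a b : H} (h : a ≤ b) : l • b ≤ l • a := by
  simpa [neg_zsmul] using zsmul_le_zsmul_right (neg_nonneg.2 hl) h

theorem zsmul_lt_zsmul_right_of_neg (hl : l < 0) {a b : H} (h : a < b) : l • b < l • a := by
  simpa [neg_zsmul] using zsmul_lt_zsmul_right (neg_pos.2 hl) h

theorem le_of_mem_dilateSum_of_nonneg (hk : 0 ≤ k) (hl : 0 ≤ l) {lo : H}
    (hlo : ∀ x ∈ X, lo ≤ x) {s : H} (hs : s ∈ dilateSum k l X) : k • lo + l • lo ≤ s := by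
  obtain ⟨x, hx, y, hy, rfl⟩ := mem_dilateSum.1 hs
  exact add_le_add (zsmul_le_zsmul_right hk (hlo x hx)) (zsmul_le_zsmul_right hl (hlo y hy))

theorem mem_Icc_of_mem_dilateSum_of_nonpos (hk : 0 ≤ k) (hl : l ≤ 0) {lo hi : H}
    (hX : ∀ x ∈ X, lo ≤ x ∧ x ≤ hi) {s : H} (hs : s ∈ dilateSum k l X) :
    s ∈ Set.Icc (k • lo + l • hi) (k • hi + l • lo) := by
  obtain ⟨x, hx, y, hy, rfl⟩ := mem_dilateSum.1 hs
  exact ⟨add_le_add (zsmul_le_zsmul_right hk (hX x hx).1)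
      (zsmul_le_zsmul_right_of_nonpos hl (hX y hy).2),
    add_le_add (zsmul_le_zsmul_right hk (hX x hx).2)
      (zsmul_le_zsmul_right_of_nonpos hl (hX y hy).1)⟩

theorem card_dilateSum_erase_add_three_le_of_pos (hk : 0 < k) (hl : 0 < l) (hkl : k ≠ l)
    {a a₂ : H} (ha : a ∈ X) (ha₂ : a₂ ∈ X) (haa₂ : a < a₂) (hbelow : ∀ x ∈ X, x ≠ a → a₂ ≤ x) :
    #(dilateSum k l (X.erase a)) + 3 ≤ #(dilateSum k l X) := by
  have hlo : ∀ s ∈ dilateSum k l (X.erase a), k • a₂ + l • a₂ ≤ s := fun _ =>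
    le_of_mem_dilateSum_of_nonneg hk.le hl.le
      fun x hx => hbelow x (mem_of_mem_erase hx) (ne_of_mem_erase hx)
  have hka : k • a < k • a₂ := zsmul_lt_zsmul_right hk haa₂
  have hla : l • a < l • a₂ := zsmul_lt_zsmul_right hl haa₂
  have h₁₂ : k • a + l • a < k • a + l • a₂ := add_lt_add_right hla _
  have h₁₃ : k • a + l • a < k • a₂ + l • a := add_lt_add_left hka _
  have h₂ : k • a + l • a₂ < k • a₂ + l • a₂ := add_lt_add_left hka _
  have h₃ : k • a₂ + l • a < k • a₂ + l • a₂ := add_lt_add_right hla _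
  have h₂₃ : k • a + l • a₂ ≠ k • a₂ + l • a := fun h => by
    have : (k - l) • (a₂ - a) = 0 := by linear_combination (norm := module) -h
    exact sub_ne_zero.2 haa₂.ne' ((smul_eq_zero.1 this).resolve_left (sub_ne_zero.2 hkl))
  exact card_add_three_le (dilateSum_mono (erase_subset a X))
    (smul_add_smul_mem_dilateSum ha ha) (smul_add_smul_mem_dilateSum ha ha₂)
    (smul_add_smul_mem_dilateSum ha₂ ha) h₁₂.ne h₁₃.ne h₂₃
    (fun h => (hlo _ h).not_gt (h₁₂.trans h₂)) (fun h => (hlo _ h).not_gt h₂)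
    (fun h => (hlo _ h).not_gt h₃)

theorem card_dilateSum_erase_add_three_le_of_neg (hk : 0 < k) (hl : l < 0) (hlk : -l < k)
    {a a₂ b₁ b : H} (ha : a ∈ X) (ha₂ : a₂ ∈ X) (hb₁ : b₁ ∈ X) (hb : b ∈ X)
    (haa₂ : a < a₂) (hb₁b : b₁ < b) (hbelow : ∀ x ∈ X, x ≠ a → a₂ ≤ x)
    (habove : ∀ x ∈ X, x ≠ b → x ≤ b₁) (hgap : b - b₁ ≤ a₂ - a) :
    #(dilateSum k l (X.erase a)) + 3 ≤ #(dilateSum k l X) := by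
  have hIcc : ∀ s ∈ dilateSum k l (X.erase a), s ∈ Set.Icc (k • a₂ + l • b) (k • b + l • a₂) :=
    fun _ => mem_Icc_of_mem_dilateSum_of_nonpos hk.le hl.le fun x hx =>
      ⟨hbelow x (mem_of_mem_erase hx) (ne_of_mem_erase hx),
        (eq_or_ne x b).elim le_of_eq fun hxb => (habove x (mem_of_mem_erase hx) hxb).trans hb₁b.le⟩
  have ha₂' : a₂ ∈ X.erase a := mem_erase.2 ⟨haa₂.ne', ha₂⟩
  have hlohi : k • a₂ + l • b ≤ k • b + l • a₂ :=
    (hIcc _ (smul_add_smul_mem_dilateSum ha₂' ha₂')).1.trans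
      (hIcc _ (smul_add_smul_mem_dilateSum ha₂' ha₂')).2
  have hgap' : (-l) • (b - b₁) < k • (a₂ - a) :=
    (zsmul_le_zsmul_right (neg_nonneg.2 hl.le) hgap).trans_lt
      (zsmul_lt_zsmul_left (sub_pos.2 haa₂) hlk)
  have h₁₂ : k • a + l • b < k • a + l • b₁ :=
    add_lt_add_right (zsmul_lt_zsmul_right_of_neg hl hb₁b) _
  have h₂ : k • a + l • b₁ < k • a₂ + l • b := by
    rw [← sub_pos]
    convert sub_pos.2 hgap' using 1
    module
  have h₃ : k • b + l • a₂ < k • b + l • a :=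
    add_lt_add_right (zsmul_lt_zsmul_right_of_neg hl haa₂) _
  have h₂₃ : k • a + l • b₁ < k • b + l • a := h₂.trans (hlohi.trans_lt h₃)
  exact card_add_three_le (dilateSum_mono (erase_subset a X))
    (smul_add_smul_mem_dilateSum ha hb) (smul_add_smul_mem_dilateSum ha hb₁)
    (smul_add_smul_mem_dilateSum hb ha) h₁₂.ne (h₁₂.trans h₂₃).ne h₂₃.ne
    (fun h => (hIcc _ h).1.not_gt (h₁₂.trans h₂)) (fun h => (hIcc _ h).1.not_gt h₂)
    (fun h => (hIcc _ h).2.not_gt h₃)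

theorem exists_card_dilateSum_erase_add_three_le (hk : 0 < k) (hl : l ≠ 0) (hlk : |l| < k)
    (hX : X.Nontrivial) : ∃ x ∈ X, #(dilateSum k l (X.erase x)) + 3 ≤ #(dilateSum k l X) := by
  obtain ⟨a, ha, a₂, ha₂, haa₂, hbelow⟩ := hX.exists_lt_forall_ne_le
  rcases hl.lt_or_gt with hl | hl
  · obtain ⟨b, hb, b₁, hb₁, hb₁b, habove⟩ : ∃ b ∈ X, ∃ b₁ ∈ X, b₁ < b ∧ ∀ x ∈ X, x ≠ b → x ≤ b₁ :=
      hX.exists_lt_forall_ne_le (α := Hᵒᵈ)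
    have hlk : -l < k := (neg_le_abs l).trans_lt hlk
    rcases le_or_gt (b - b₁) (a₂ - a) with hgap | hgap
    · exact ⟨a, ha, card_dilateSum_erase_add_three_le_of_neg hk hl hlk ha ha₂ hb₁ hb haa₂ hb₁b
        hbelow habove hgap⟩
    refine ⟨b, hb, ?_⟩
    have hneg := card_dilateSum_erase_add_three_le_of_neg (X := -X) hk hl hlk
      (neg_mem_neg hb) (neg_mem_neg hb₁) (neg_mem_neg ha₂) (neg_mem_neg ha)
      (neg_lt_neg hb₁b) (neg_lt_neg haa₂)
      (fun x hx hxb => neg_le.1 (habove (-x) (mem_neg'.1 hx) (by rintro rfl; simp at hxb)))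
      (fun x hx hxa => le_neg.1 (hbelow (-x) (mem_neg'.1 hx) (by rintro rfl; simp at hxa)))
      (by rw [neg_sub_neg, neg_sub_neg]; exact hgap.le)
    rwa [← neg_erase, dilateSum_neg, dilateSum_neg, card_neg, card_neg] at hneg
  · exact ⟨a, ha, card_dilateSum_erase_add_three_le_of_pos hk hl
      (ne_of_gt ((le_abs_self l).trans_lt hlk)) ha ha₂ haa₂ hbelow⟩

theorem three_mul_card_sub_two_le_card_dilateSum_of_abs_lt (hk : 0 < k) (hl : l ≠ 0)
    (hlk : |l| < k) (hX : X.Nonempty) : 3 * #X - 2 ≤ #(dilateSum k l X) := by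
  induction X using Finset.strongInduction with
  | H X ih =>
  rcases hX.exists_eq_singleton_or_nontrivial with ⟨x, rfl⟩ | hX
  · simp [dilateSum_singleton]
  obtain ⟨x, hx, hstep⟩ := exists_card_dilateSum_erase_add_three_le hk hl hlk hX
  have := ih _ (erase_ssubset hx) hX.erase_nonempty
  rw [card_erase_of_mem hx] at this
  omega

theorem three_mul_card_sub_two_le_card_dilateSum (hk : k ≠ 0) (hl : l ≠ 0)
    (hkl : k.natAbs ≠ l.natAbs) (hX : X.Nonempty) : 3 * #X - 2 ≤ #(dilateSum k l X) := by
  wlog hlk : l.natAbs < k.natAbs generalizing k l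
  · rw [dilateSum_comm]
    exact this hl hk hkl.symm (by omega)
  have habs : |l| < |k| := by rwa [Int.abs_eq_natAbs, Int.abs_eq_natAbs, Nat.cast_lt]
  rcases hk.lt_or_gt with hk | hk
  · rw [← card_neg (dilateSum k l X), ← dilateSum_neg_neg]
    exact three_mul_card_sub_two_le_card_dilateSum_of_abs_lt (neg_pos.2 hk) (neg_ne_zero.2 hl)
      (by rwa [abs_neg, ← abs_of_neg hk]) hX
  · exact three_mul_card_sub_two_le_card_dilateSum_of_abs_lt hk hl
      (by rwa [← abs_of_pos hk]) hX

end LinearOrder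

theorem dilates_lower_bound_torsion_free_abelian
    {G : Type*} [AddCommGroup G] [DecidableEq G]
    (hG : ∀ g : G, g ≠ 0 → ¬IsOfFinAddOrder g)
    (k l : ℤ) (hk : k ≠ 0) (hl : l ≠ 0) (hkl : k.natAbs ≠ l.natAbs)
    (X : Finset G) (hX : X.Nonempty) :
    3 * X.card - 2 ≤ (Finset.image₂ (fun x y => k • x + l • y) X X).card := by
  have : IsAddTorsionFree G := .of_not_isOfFinAddOrder fun g => hG g
  obtain ⟨H, _, _, _, φ, hφ⟩ := IsAddTorsionFree.exists_injective_addMonoidHom_linearOrder G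
  have := three_mul_card_sub_two_le_card_dilateSum hk hl hkl (hX.image φ)
  rwa [card_dilateSum_image hφ, card_image_of_injective X hφ] at this
end

section
/- Let X be a non-empty finite subset of ℤ^n that generates ℤ^n as a group and contains 0, and suppose the gcd of all coordinates of all elements of X equals 1. Let k and l be coprime non-zero integers with |l| ≥ 2. Then the set k·X does not lie in a single coset of the subgroup generated by l·X; in particular k·X meets at least two distinct cosets of ⟨l·X⟩. -/
/-!
Taking `y = 0`, the hypothesis puts `k • X` inside `⟨l • X⟩ = l • ⟨X⟩ = l • ℤⁿ`. Since `k` is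
prime to `l`, this forces `l` to divide every coordinate of every element of `X`, so `l` is a unit
by the gcd condition, contradicting `|l| ≥ 2`.
-/

theorem AddSubgroup.closure_image_zsmul {G : Type*} [AddCommGroup G] (l : ℤ) (S : Set G) :
    closure ((fun x => l • x) '' S) = (closure S).map (zsmulAddGroupHom l) := by
  rw [AddMonoidHom.map_closure]
  rfl

theorem Int.dvd_of_smul_mem_map_zsmul_top {ι : Type*} {k l : ℤ} (hkl : IsCoprime k l)
    {x : ι → ℤ} (hx : k • x ∈ (⊤ : AddSubgroup (ι → ℤ)).map (zsmulAddGroupHom l)) (i : ι) :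
    l ∣ x i := by
  obtain ⟨z, -, hz⟩ := hx
  have hzi : l * z i = k * x i := congrFun hz i
  exact hkl.symm.dvd_of_dvd_mul_left ⟨z i, hzi.symm⟩

theorem dilate_meets_two_cosets_general
    (n : ℕ) (X : Finset (Fin n → ℤ))
    (h0 : (0 : Fin n → ℤ) ∈ X)
    (hgen : AddSubgroup.closure (X : Set (Fin n → ℤ)) = ⊤)
    (hgcd : ∀ d : ℤ, (∀ x ∈ X, ∀ i : Fin n, d ∣ x i) → IsUnit d)
    (k l : ℤ) (hl : 2 ≤ l.natAbs) (hkl : IsCoprime k l) :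
    ¬ ∀ x ∈ X, ∀ y ∈ X,
        k • x - k • y ∈
          AddSubgroup.closure ((X.image fun x => l • x : Finset (Fin n → ℤ)) :
            Set (Fin n → ℤ)) := by
  intro h
  have hdvd : ∀ x ∈ X, ∀ i : Fin n, l ∣ x i := by
    intro x hx
    have hmem := h x hx 0 h0
    rw [smul_zero, sub_zero, Finset.coe_image, AddSubgroup.closure_image_zsmul, hgen] at hmem
    exact Int.dvd_of_smul_mem_map_zsmul_top hkl hmem
  have := Int.isUnit_iff_natAbs_eq.mp (hgcd l hdvd)
  omega

theorem dilate_meets_two_cosets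
    (n : ℕ) (hn : 1 ≤ n) (X : Finset (Fin n → ℤ)) (hX : X.Nonempty)
    (h0 : (0 : Fin n → ℤ) ∈ X)
    (hgen : AddSubgroup.closure (X : Set (Fin n → ℤ)) = ⊤)
    (hgcd : ∀ d : ℤ, (∀ x ∈ X, ∀ i : Fin n, d ∣ x i) → IsUnit d)
    (k l : ℤ) (hk : k ≠ 0) (hl : 2 ≤ l.natAbs) (hkl : IsCoprime k l) :
    ¬ ∀ x ∈ X, ∀ y ∈ X,
        k • x - k • y ∈
          AddSubgroup.closure ((X.image fun x => l • x : Finset (Fin n → ℤ)) :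
            Set (Fin n → ℤ)) :=
  dilate_meets_two_cosets_general n X h0 hgen hgcd k l hl hkl
end

section
/- Let k and l be non-zero integers with k ≠ −l. In the free group F on two generators a, b, the element a^k b^l a^{−l} b^{−k} is not a proper power: there is no element x ∈ F and integer t ≥ 2 with a^k b^l a^{−l} b^{−k} = x^t. -/
/-!
Write `w = a^k b^l a^{-l} b^{-k}`. Its freely reduced word `a^|k| b^|l| a^|l| b^|k|` (with signs)
starts with an `a`-letter and ends with a `b`-letter, so it is cyclically reduced. If `w = x^t`,
the reduced word of `x^t` is `C R^t C⁻¹` with `R` the cyclic reduction of `x`; cyclic reducedness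
forces `C` to be empty, so the word of `w` is literally `R^t` and has period `|R| ≤ |w| / 2`.
A period that short must be `|k| + |l|`, and matching the two halves `a^k b^l` and `a^{-l} b^{-k}`
gives `k = -l`.
-/

open List

namespace List

variable {β : Type*}

theorem getElem?_add_length_flatten_replicate (t : ℕ) (R : List β) {i : ℕ}
    (hi : i + R.length < ((replicate t R).flatten).length) :
    ((replicate t R).flatten)[i + R.length]? = ((replicate t R).flatten)[i]? := by
  cases t with
  | zero => simp at hi
  | succ m =>
    have hV : (replicate (m + 1) R).flatten = (replicate m R).flatten ++ R := by
      rw [replicate_succ', flatten_concat]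
    rw [replicate_succ, flatten_cons] at hi ⊢
    rw [length_append] at hi
    rw [getElem?_append_right (by omega), Nat.add_sub_cancel, ← flatten_cons, ← replicate_succ,
      hV, getElem?_append_left (by omega)]

variable {p q r s : β} {K L : ℕ}

theorem getElem?_blocks (i : ℕ) :
    (replicate K p ++ replicate L q ++ replicate L r ++ replicate K s)[i]? =
      if i < K then some p else if i < K + L then some q else if i < K + L + L then some r
      else if i < K + L + L + K then some s else none := by
  simp only [getElem?_append, getElem?_replicate, length_append, length_replicate]
  split_ifs <;> first | rfl | omega

theorem eq_of_blocks_periodic (hpq : p ≠ q) (hps : p ≠ s) (hK : 0 < K) {d : ℕ} (hd : 0 < d)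
    (h2d : 2 * d ≤ 2 * K + 2 * L)
    (hper : ∀ i, i + d < 2 * K + 2 * L →
      (replicate K p ++ replicate L q ++ replicate L r ++ replicate K s)[i + d]? =
        (replicate K p ++ replicate L q ++ replicate L r ++ replicate K s)[i]?) :
    r = p ∧ K = L := by
  simp only [getElem?_blocks] at hper
  -- A period shorter than the first block would carry `p` on to position `K`.
  have hKd : K ≤ d := by
    by_contra! hdK
    have h := hper (K - d) (by omega)
    rw [Nat.sub_add_cancel hdK.le] at h
    grind
  -- Position `d` carries `p`, which (past the first block) can only sit in the third block.
  obtain ⟨rfl, rfl⟩ : d = K + L ∧ r = p := by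
    have h := hper 0 (by omega)
    grind
  refine ⟨rfl, ?_⟩
  by_contra hKL
  rcases Nat.lt_or_gt_of_ne hKL with hKL | hKL
  · have h := hper K (by omega)
    grind
  · have h := hper L (by omega)
    grind

theorem eq_of_blocks_eq_flatten_replicate (hpq : p ≠ q) (hps : p ≠ s) (hK : 0 < K) {t : ℕ}
    (ht : 2 ≤ t) {R : List β}
    (h : replicate K p ++ replicate L q ++ replicate L r ++ replicate K s = (replicate t R).flatten) :
    r = p ∧ K = L := by
  have hlen : 2 * K + 2 * L = t * R.length := by
    simpa [two_mul, add_assoc, add_comm, add_left_comm] using congrArg length h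
  have hR : 0 < R.length := Nat.pos_of_ne_zero fun h0 => by rw [h0] at hlen; omega
  refine eq_of_blocks_periodic hpq hps hK hR (by nlinarith) fun i hi => ?_
  rw [h]
  exact getElem?_add_length_flatten_replicate t R (by simp; omega)

end List

namespace FreeGroup

variable {α : Type*}

theorem IsCyclicallyReduced.eq_nil_of_append_invRev {C M : List (α × Bool)}
    (h : IsCyclicallyReduced (C ++ M ++ invRev C)) : C = [] := by
  cases C with
  | nil => rfl
  | cons c C =>
    have hlast : (c :: C ++ M ++ invRev (c :: C)).getLast? = some (c.1, !c.2) := by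
      rw [invRev_cons, ← append_assoc, getLast?_append_of_ne_nil _ (by simp [invRev])]
      simp [invRev]
    have := h.2 _ hlast c (by simp) rfl
    simp at this

theorem exists_toWord_pow_eq_flatten_replicate [DecidableEq α] {x : FreeGroup α} {n : ℕ}
    (hn : n ≠ 0) (h : IsCyclicallyReduced (x ^ n).toWord) :
    ∃ R, (x ^ n).toWord = (replicate n R).flatten := by
  rw [toWord_pow, reduceCyclically.reduce_flatten_replicate isReduced_toWord, if_neg hn] at h ⊢
  rw [h.eq_nil_of_append_invRev]
  exact ⟨reduceCyclically x.toWord, by simp [invRev_empty]⟩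

theorem of_zpow_eq_mk (a : α) (k : ℤ) : of a ^ k = mk (replicate k.natAbs (a, 0 ≤ k)) := by
  cases k with
  | ofNat n => simp [of, pow_mk, flatten_replicate_singleton]
  | negSucc n =>
    rw [zpow_negSucc, of, pow_mk, inv_mk, flatten_replicate_singleton]
    simp [invRev]

theorem isCyclicallyReduced_blocks {a b : α} (hab : a ≠ b) {K L : ℕ} {ε₁ ε₂ ε₃ ε₄ : Bool} :
    IsCyclicallyReduced (replicate K (a, ε₁) ++ replicate L (b, ε₂) ++ replicate L (a, ε₃) ++
      replicate K (b, ε₄)) := by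
  simp [IsCyclicallyReduced, IsReduced, isChain_append, isChain_replicate_of_rel,
    getLast?_replicate, head?_replicate]
  grind

end FreeGroup

open FreeGroup

theorem commutator_like_word_not_proper_power_general
    (k l : ℤ) (hk : k ≠ 0) (hkl : k ≠ -l) :
    ¬ ∃ (x : FreeGroup Bool) (t : ℕ), 2 ≤ t ∧
        (FreeGroup.of false) ^ k * (FreeGroup.of true) ^ l *
          (FreeGroup.of false) ^ (-l) * (FreeGroup.of true) ^ (-k) = x ^ t := by
  rintro ⟨x, t, ht, hx⟩
  simp only [of_zpow_eq_mk, mul_mk, Int.natAbs_neg] at hx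
  have hW := congrArg toWord hx
  rw [toWord_mk, (isCyclicallyReduced_blocks Bool.false_ne_true).isReduced.reduce_eq] at hW
  obtain ⟨R, hR⟩ := exists_toWord_pow_eq_flatten_replicate (show t ≠ 0 by omega)
    (by rw [← hW]; exact isCyclicallyReduced_blocks Bool.false_ne_true)
  obtain ⟨hsign, habs⟩ := eq_of_blocks_eq_flatten_replicate (by simp) (by simp)
    (Int.natAbs_pos.mpr hk) ht (hW.trans hR)
  simp only [Prod.mk.injEq, true_and, decide_eq_decide] at hsign
  omega

theorem commutator_like_word_not_proper_power
    (k l : ℤ) (hk : k ≠ 0) (hl : l ≠ 0) (hkl : k ≠ -l) :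
    ¬ ∃ (x : FreeGroup Bool) (t : ℕ), 2 ≤ t ∧
        (FreeGroup.of false) ^ k * (FreeGroup.of true) ^ l *
          (FreeGroup.of false) ^ (-l) * (FreeGroup.of true) ^ (-k) = x ^ t :=
  commutator_like_word_not_proper_power_general k l hk hkl
end

section
/- Let k and l be non-zero integers. There exist a torsion-free group G (written multiplicatively) and a subset X of G with |X| = 2 such that |X^{·k} X^{·l}| < 3|X| − 2, i.e., |X^{·k} X^{·l}| ≤ 3. -/
/-!
Take the fundamental group of the Klein bottle, `⟨s, t | t s t⁻¹ = s⁻¹⟩`. As an extension of `ℤ`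
by `ℤ` it is torsion-free, yet its elements `x = t` and `y = s t` are distinct with `x² = y²`. In any group, `x² = y²` gives
`x ^ k = y ^ k` for every even `k`; since one of `k`, `l`, `k + l` is even, one of
`y ^ k * y ^ l = x ^ k * y ^ l`, `y ^ k * y ^ l = y ^ k * x ^ l`, `y ^ k * y ^ l = x ^ k * x ^ l`
holds, so the four products `a ^ k * b ^ l` with `a, b ∈ {x, y}` take at most three values.
-/

section SquareEq

variable {G : Type*} [Group G] {x y : G}

theorem zpow_eq_zpow_of_sq_eq_sq (h : x ^ 2 = y ^ 2) {k : ℤ} (hk : Even k) : x ^ k = y ^ k := by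
  obtain ⟨m, rfl⟩ := hk.two_dvd
  rw [zpow_mul, zpow_mul, zpow_ofNat, zpow_ofNat, h]

theorem card_image₂_zpow_mul_zpow_pair_le_three [DecidableEq G] (h : x ^ 2 = y ^ 2) (k l : ℤ) :
    (Finset.image₂ (fun a b => a ^ k * b ^ l) {x, y} {x, y}).card ≤ 3 := by
  have hyy : y ^ k * y ^ l ∈ ({x ^ k * x ^ l, x ^ k * y ^ l, y ^ k * x ^ l} : Finset G) := by
    rcases Int.even_or_odd k with hk | hk
    · simp [zpow_eq_zpow_of_sq_eq_sq h hk]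
    rcases Int.even_or_odd l with hl | hl
    · simp [zpow_eq_zpow_of_sq_eq_sq h hl]
    · simp [← zpow_add, zpow_eq_zpow_of_sq_eq_sq h (hk.add_odd hl)]
  have hsub : Finset.image₂ (fun a b => a ^ k * b ^ l) {x, y} {x, y} ⊆
      {x ^ k * x ^ l, x ^ k * y ^ l, y ^ k * x ^ l} := by
    rw [Finset.image₂_subset_iff]
    simp_all
  exact (Finset.card_le_card hsub).trans Finset.card_le_three

end SquareEq

namespace SemidirectProduct

variable {N G : Type*} [Group N] [Group G] {φ : G →* MulAut N}

theorem eq_one_of_isOfFinOrder (hN : ∀ n : N, IsOfFinOrder n → n = 1)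
    (hG : ∀ g : G, IsOfFinOrder g → g = 1) {x : N ⋊[φ] G} (hx : IsOfFinOrder x) : x = 1 := by
  have hright : x.right = 1 := hG _ (rightHom.isOfFinOrder hx)
  have hx_inl : inl x.left = x := by simpa [hright] using inl_left_mul_inr_right x
  have hleft : x.left = 1 := hN _ <| inl_injective.isOfFinOrder_iff.mp (hx_inl ▸ hx)
  rw [← hx_inl, hleft, map_one]

end SemidirectProduct

/-- The fundamental group `⟨s, t | t s t⁻¹ = s⁻¹⟩` of the Klein bottle, with `s = inl (ofAdd 1)`
and `t = inr (ofAdd 1)`. -/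
abbrev KleinBottleGroup : Type :=
  Multiplicative ℤ ⋊[zpowersHom _ (MulEquiv.inv (Multiplicative ℤ))] Multiplicative ℤ

namespace KleinBottleGroup

open SemidirectProduct

theorem eq_one_of_isOfFinOrder {g : KleinBottleGroup} (hg : IsOfFinOrder g) : g = 1 :=
  SemidirectProduct.eq_one_of_isOfFinOrder (fun _ ↦ IsOfFinOrder.eq_one')
    (fun _ ↦ IsOfFinOrder.eq_one') hg

theorem exists_ne_sq_eq_sq : ∃ x y : KleinBottleGroup, x ≠ y ∧ x ^ 2 = y ^ 2 := by
  refine ⟨inr (.ofAdd 1), inl (.ofAdd 1) * inr (.ofAdd 1), ?_, ?_⟩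
  · simp [SemidirectProduct.ext_iff]
  · ext <;> simp [sq]

end KleinBottleGroup

theorem exists_torsion_free_group_small_dilate_sum_general
    (k l : ℤ) :
    ∃ (G : Type) (_ : Group G) (_ : DecidableEq G),
      (∀ g : G, g ≠ 1 → ¬IsOfFinOrder g) ∧
      ∃ X : Finset G, X.card = 2 ∧
        (Finset.image₂ (fun x y => x ^ k * y ^ l) X X).card ≤ 3 := by
  classical
  obtain ⟨x, y, hxy, hsq⟩ := KleinBottleGroup.exists_ne_sq_eq_sq
  exact ⟨KleinBottleGroup, inferInstance, inferInstance,
    fun _ hg hfin ↦ hg (KleinBottleGroup.eq_one_of_isOfFinOrder hfin),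
    {x, y}, Finset.card_pair hxy, card_image₂_zpow_mul_zpow_pair_le_three hsq k l⟩

theorem exists_torsion_free_group_small_dilate_sum
    (k l : ℤ) (hk : k ≠ 0) (hl : l ≠ 0) :
    ∃ (G : Type) (_ : Group G) (_ : DecidableEq G),
      (∀ g : G, g ≠ 1 → ¬IsOfFinOrder g) ∧
      ∃ X : Finset G, X.card = 2 ∧
        (Finset.image₂ (fun x y => x ^ k * y ^ l) X X).card ≤ 3 :=
  exists_torsion_free_group_small_dilate_sum_general k l
end

section
/- Let k, l be non-zero integers with k ≠ −l and let G = ⟨a, b | a^k b^l = b^k a^l⟩ be the corresponding two-generator one-relator group. Then with X = {a, b}, the set X^{·k} X^{·l} = {a^{k+l}, a^k b^l, b^{k+l}} has cardinality exactly 3. -/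
/-!
If `k = l` the relation says that `a^k` and `b^k` commute, so `a ↦ 0`, `b ↦ 1` defines a map to
`ℤ`, which separates `a^n` from `b^n` for every `n ≠ 0`. Otherwise send `a` and `b` to the
homotheties of `ℂ` with a common ratio `u` about the distinct centres `1` and `0`. The relation
then becomes `u^(k+l) - 2 u^k + 1 = 0`, and the `n`-th powers of the two homotheties differ as soon
as `u^n ≠ 1`. A root `u` with `u^k ≠ 1` exists: after dividing the exponents by their gcd, `1` is a
simple root (the derivative there is proportional to `l - k`) of a polynomial of degree at least
`2`, which therefore has another root, and any `gcd`-th root of that one works. Finally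
`a^k ≠ b^k`, `a^l ≠ b^l` and `a^(k+l) ≠ b^(k+l)` make the three products pairwise distinct.
-/

/-- The single relation `a^k b^l (b^k a^l)⁻¹` in the free group on two
generators (`false` plays the role of `a`, `true` of `b`). -/
def dilateRels (k l : ℤ) : Set (FreeGroup Bool) :=
  {(FreeGroup.of false) ^ k * (FreeGroup.of true) ^ l *
    ((FreeGroup.of true) ^ k * (FreeGroup.of false) ^ l)⁻¹}

open Polynomial in
theorem Polynomial.exists_isRoot_ne_of_eval_derivative_ne_zero {K : Type*} [Field K]
    [IsAlgClosed K] {p : K[X]} {r : K} (hp : 2 ≤ p.natDegree) (hr : p.IsRoot r)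
    (hr' : p.derivative.eval r ≠ 0) : ∃ y, p.IsRoot y ∧ y ≠ r := by
  set q := p /ₘ (X - C r)
  have hpq : (X - C r) * q = p := mul_divByMonic_eq_iff_isRoot.mpr hr
  have hq : q.eval r ≠ 0 := by simpa [← hpq, derivative_mul] using hr'
  have hdeg : q.degree ≠ 0 := by
    have hqdeg : q.natDegree = p.natDegree - 1 := by
      rw [natDegree_divByMonic p (monic_X_sub_C r), natDegree_X_sub_C]
    exact (natDegree_pos_iff_degree_pos.mp (by omega)).ne'
  obtain ⟨y, hy⟩ := IsAlgClosed.exists_root q hdeg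
  refine ⟨y, ?_, fun h => hq (h ▸ hy)⟩
  rw [← hpq, IsRoot, eval_mul, hy.eq_zero, mul_zero]

section Roots

variable {K : Type*} [Field K] [IsAlgClosed K] [CharZero K]

open Polynomial in
theorem exists_pow_sub_two_mul_pow_add_pow_eq_zero {a b c : ℕ} (hab : a ≠ b) (hbc : b ≠ c)
    (hac : a ≠ c) (h0 : a = 0 ∨ b = 0 ∨ c = 0) (h2 : a + c ≠ 2 * b) :
    ∃ y : K, y ≠ 0 ∧ y ≠ 1 ∧ y ^ a - 2 * y ^ b + y ^ c = 0 := by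
  set p : K[X] := X ^ a - C 2 * X ^ b + X ^ c
  have hcoeff : ∀ i ∈ [a, b, c], p.coeff i ≠ 0 := by
    simp [p, coeff_X_pow, coeff_C_mul, hab, hbc, hac, hab.symm, hbc.symm, hac.symm]
  have hdeg : 2 ≤ p.natDegree := by
    obtain ⟨i, hi, h2i⟩ : ∃ i ∈ [a, b, c], 2 ≤ i := by
      simp only [List.mem_cons, List.not_mem_nil, or_false, exists_eq_or_imp, exists_eq_left]
      omega
    exact h2i.trans (le_natDegree_of_ne_zero (hcoeff i hi))
  have hroot : p.IsRoot 1 := by norm_num [p]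
  have hderiv : p.derivative.eval 1 ≠ 0 := by
    have hcast : ((a + c : ℕ) : K) ≠ ((2 * b : ℕ) : K) := Nat.cast_injective.ne h2
    push_cast at hcast
    simpa [p, derivative_X_pow, sub_eq_zero, sub_add_eq_add_sub] using hcast
  obtain ⟨y, hy, hy1⟩ := p.exists_isRoot_ne_of_eval_derivative_ne_zero hdeg hroot hderiv
  refine ⟨y, ?_, hy1, by simpa [p] using hy.eq_zero⟩
  rintro rfl
  exact hcoeff 0 (by simp only [List.mem_cons, List.not_mem_nil, or_false]; omega)
    (by rw [coeff_zero_eq_eval_zero]; exact hy)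

theorem exists_zpow_sub_two_mul_zpow_add_one_eq_zero {m n : ℤ} (hm : m ≠ 0) (hn : n ≠ 0)
    (hmn : m ≠ n) (h2 : n ≠ 2 * m) : ∃ y : K, y ≠ 0 ∧ y ≠ 1 ∧ y ^ n - 2 * y ^ m + 1 = 0 := by
  -- multiplying by `y ^ (-t)` turns the three exponents into natural numbers, one of them `0`
  set t := min 0 (min m n)
  obtain ⟨y, hy0, hy1, hy⟩ := exists_pow_sub_two_mul_pow_add_pow_eq_zero (K := K)
    (a := (n - t).toNat) (b := (m - t).toNat) (c := (-t).toNat)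
    (by omega) (by omega) (by omega) (by omega) (by omega)
  refine ⟨y, hy0, hy1, ?_⟩
  have hpow : ∀ e, t ≤ e → y ^ (e - t).toNat = y ^ e / y ^ t := fun e he => by
    rw [← zpow_natCast, Int.toNat_of_nonneg (by omega), zpow_sub₀ hy0]
  rw [hpow n (by omega), hpow m (by omega), ← zero_sub, hpow 0 (by omega)] at hy
  field_simp at hy
  linear_combination hy

theorem exists_zpow_sub_two_mul_zpow_add_one_eq_zero_and_zpow_ne_one {m n : ℤ} (hm : m ≠ 0)
    (hn : n ≠ 0) (hmn : m ≠ n) (h2 : n ≠ 2 * m) :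
    ∃ u : K, u ≠ 0 ∧ u ^ n - 2 * u ^ m + 1 = 0 ∧ u ^ m ≠ 1 := by
  have hd : 0 < Int.gcd m n := Int.gcd_pos_of_ne_zero_left n hm
  obtain ⟨m', hm'⟩ := Int.gcd_dvd_left (a := m) (b := n)
  obtain ⟨n', hn'⟩ := Int.gcd_dvd_right (a := m) (b := n)
  obtain ⟨y, hy0, hy1, hy⟩ := exists_zpow_sub_two_mul_zpow_add_one_eq_zero (K := K)
    (m := m') (n := n') (by rintro rfl; exact hm (by simpa using hm'))
    (by rintro rfl; exact hn (by simpa using hn')) (by rintro rfl; exact hmn (hm'.trans hn'.symm))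
    (by rintro rfl; exact h2 (by linear_combination hn' - 2 * hm'))
  obtain ⟨u, rfl⟩ := IsAlgClosed.exists_pow_nat_eq y hd
  have hu0 : u ≠ 0 := fun h => hy0 (by rw [h, zero_pow hd.ne'])
  have hpow : ∀ e e' : ℤ, e = Int.gcd m n * e' → u ^ e = (u ^ Int.gcd m n) ^ e' :=
    fun e e' he => by rw [he, zpow_mul, zpow_natCast]
  have hu : u ^ n - 2 * u ^ m + 1 = 0 := by rw [hpow n n' hn', hpow m m' hm']; exact hy
  refine ⟨u, hu0, hu, fun hm1 => hy1 ?_⟩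
  have hn1 : u ^ n = 1 := by linear_combination hu + 2 * hm1
  rw [← zpow_natCast, Int.gcd_eq_gcd_ab m n, zpow_add₀ hu0, zpow_mul, zpow_mul, hm1, hn1,
    one_zpow, one_zpow, mul_one]

end Roots

namespace AffineEquiv

variable {K V : Type*} [Field K] [AddCommGroup V] [Module K V]

theorem homothetyUnitsMulHom_zpow_apply (p : V) (u : Kˣ) (n : ℤ) (x : V) :
    (homothetyUnitsMulHom p u ^ n) x = (u : K) ^ n • (x - p) + p := by
  rw [← map_zpow, coe_homothetyUnitsMulHom_apply, AffineMap.homothety_apply,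
    Units.val_zpow_eq_zpow_val, vsub_eq_sub, vadd_eq_add]

theorem homothetyUnitsMulHom_zpow_mul_zpow_comm (p q : V) (u : Kˣ) {k l : ℤ}
    (hu : (u : K) ^ (k + l) - 2 * (u : K) ^ k + 1 = 0) :
    homothetyUnitsMulHom p u ^ k * homothetyUnitsMulHom q u ^ l =
      homothetyUnitsMulHom q u ^ k * homothetyUnitsMulHom p u ^ l := by
  ext x
  simp only [coe_mul, Function.comp_apply, homothetyUnitsMulHom_zpow_apply]
  rw [zpow_add₀ u.ne_zero] at hu
  rw [← sub_eq_zero]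
  calc _ = ((u : K) ^ k * (u : K) ^ l - 2 * (u : K) ^ k + 1) • (p - q) := by module
    _ = 0 := by rw [hu, zero_smul]

theorem homothetyUnitsMulHom_zpow_ne {p q : V} (hpq : p ≠ q) {u : Kˣ} {n : ℤ}
    (hu : (u : K) ^ n ≠ 1) : homothetyUnitsMulHom p u ^ n ≠ homothetyUnitsMulHom q u ^ n := by
  intro h
  have hq := congrArg (· q) h
  simp only [homothetyUnitsMulHom_zpow_apply, sub_self, smul_zero, zero_add] at hq
  have hsmul : ((u : K) ^ n - 1) • (q - p) = 0 := by
    linear_combination (norm := module) hq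
  rcases smul_eq_zero.mp hsmul with h1 | h1
  · exact hu (sub_eq_zero.mp h1)
  · exact hpq (sub_eq_zero.mp h1).symm

end AffineEquiv

section Dilate

variable {G : Type*} [Group G] {a b : G} {k l : ℤ}

theorem setOf_zpow_mul_zpow_mem_pair_eq (h : b ^ k * a ^ l = a ^ k * b ^ l) :
    {z | ∃ x ∈ ({a, b} : Set G), ∃ y ∈ ({a, b} : Set G), z = x ^ k * y ^ l} =
      {a ^ (k + l), a ^ k * b ^ l, b ^ (k + l)} := by
  ext z
  simp only [Set.mem_ofPred_eq, Set.mem_insert_iff, Set.mem_singleton_iff]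
  constructor
  · rintro ⟨x, hx, y, hy, rfl⟩
    rcases hx with rfl | rfl <;> rcases hy with rfl | rfl
    · exact Or.inl (zpow_add _ k l).symm
    · exact Or.inr (Or.inl rfl)
    · exact Or.inr (Or.inl h)
    · exact Or.inr (Or.inr (zpow_add _ k l).symm)
  · rintro (rfl | rfl | rfl)
    · exact ⟨a, Or.inl rfl, a, Or.inl rfl, zpow_add a k l⟩
    · exact ⟨a, Or.inl rfl, b, Or.inr rfl, rfl⟩
    · exact ⟨b, Or.inr rfl, b, Or.inr rfl, zpow_add b k l⟩

theorem ncard_zpow_add_zpow_mul_zpow_eq_three (hk : a ^ k ≠ b ^ k) (hl : a ^ l ≠ b ^ l)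
    (hkl : a ^ (k + l) ≠ b ^ (k + l)) :
    ({a ^ (k + l), a ^ k * b ^ l, b ^ (k + l)} : Set G).ncard = 3 := by
  refine Set.ncard_eq_three.mpr ⟨_, _, _, ?_, hkl, ?_, rfl⟩
  · rw [zpow_add]
    exact fun h => hl (mul_left_cancel h)
  · rw [zpow_add]
    exact fun h => hk (mul_right_cancel h)

end Dilate

namespace dilateRels

variable {k l : ℤ}

theorem of_true_zpow_mul_of_false_zpow :
    (PresentedGroup.of true : PresentedGroup (dilateRels k l)) ^ k * PresentedGroup.of false ^ l =
      PresentedGroup.of false ^ k * PresentedGroup.of true ^ l := by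
  have h := PresentedGroup.mk_eq_mk_of_mul_inv_mem (rels := dilateRels k l) (Set.mem_singleton _)
  rw [map_mul, map_mul, map_zpow, map_zpow, map_zpow, map_zpow] at h
  exact h.symm

theorem of_false_zpow_ne_of_true_zpow {H : Type*} [Group H] {g h : H}
    (hgh : g ^ k * h ^ l = h ^ k * g ^ l) {n : ℤ} (hn : g ^ n ≠ h ^ n) :
    (PresentedGroup.of false : PresentedGroup (dilateRels k l)) ^ n ≠
      PresentedGroup.of true ^ n := by
  have hrel : ∀ r ∈ dilateRels k l, FreeGroup.lift (fun x => cond x h g) r = 1 := by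
    rintro r rfl
    simp [hgh]
  intro e
  apply hn
  simpa using congrArg (PresentedGroup.toGroup hrel) e

theorem of_false_zpow_ne_of_true_zpow_of_mem (hk : k ≠ 0) (hl : l ≠ 0) (hkl : k ≠ -l) :
    ∀ n ∈ ({k, l, k + l} : Set ℤ),
      (PresentedGroup.of false : PresentedGroup (dilateRels k l)) ^ n ≠
        PresentedGroup.of true ^ n := by
  intro n hn
  simp only [Set.mem_insert_iff, Set.mem_singleton_iff] at hn
  by_cases hlk : k = l
  · subst hlk
    refine of_false_zpow_ne_of_true_zpow (g := (1 : Multiplicative ℤ)) (h := .ofAdd 1)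
      (by simp) ?_
    rw [one_zpow, ne_comm, ← ofAdd_zsmul, ne_eq, ofAdd_eq_one, smul_eq_mul, mul_one]
    omega
  · obtain ⟨u, hu0, hu, huk⟩ := exists_zpow_sub_two_mul_zpow_add_one_eq_zero_and_zpow_ne_one
      (K := ℂ) (m := k) (n := k + l) hk (by omega) (by omega) (by omega)
    refine of_false_zpow_ne_of_true_zpow
      (AffineEquiv.homothetyUnitsMulHom_zpow_mul_zpow_comm (1 : ℂ) 0 (Units.mk0 u hu0) hu)
      (AffineEquiv.homothetyUnitsMulHom_zpow_ne one_ne_zero ?_)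
    rw [Units.val_mk0]
    rcases hn with rfl | rfl | rfl
    · exact huk
    · intro hl1
      rw [zpow_add₀ hu0, hl1, mul_one] at hu
      exact huk (by linear_combination -hu)
    · exact fun hkl1 => huk (by linear_combination (hkl1 - hu) / 2)

end dilateRels

theorem presented_group_dilate_sum_card_three
    (k l : ℤ) (hk : k ≠ 0) (hl : l ≠ 0) (hkl : k ≠ -l) :
    ∀ (a b : PresentedGroup (dilateRels k l)),
      a = PresentedGroup.of false → b = PresentedGroup.of true →
      b ^ k * a ^ l = a ^ k * b ^ l ∧
      {z : PresentedGroup (dilateRels k l) |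
          ∃ x ∈ ({a, b} : Set _), ∃ y ∈ ({a, b} : Set _), z = x ^ k * y ^ l}
        = {a ^ (k + l), a ^ k * b ^ l, b ^ (k + l)} ∧
      ({a ^ (k + l), a ^ k * b ^ l, b ^ (k + l)} :
          Set (PresentedGroup (dilateRels k l))).ncard = 3 := by
  rintro a b rfl rfl
  have hrel := dilateRels.of_true_zpow_mul_of_false_zpow (k := k) (l := l)
  have hne := dilateRels.of_false_zpow_ne_of_true_zpow_of_mem hk hl hkl
  exact ⟨hrel, setOf_zpow_mul_zpow_mem_pair_eq hrel,
    ncard_zpow_add_zpow_mul_zpow_eq_three (hne k (by simp)) (hne l (by simp))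
      (hne (k + l) (by simp))⟩
end

section
/- Let k and l be positive integers with l ≥ k, and let α > 0 be a real number such that Σ_{i=k+1}^{k+l} α^{i/k} = Σ_{i=1}^{k} α^{i/k}. In the group G = ℝ ⋊ ℚ with multiplication (x,u)(y,v) = (x + α^u y, u + v), set e₀ = (α^{1/k}, 1/k) and e₁ = (0, 1/k). Then e₀^k e₁^l = e₁^k e₀^l. -/
/-!
Both generators have `ℚ`-component `1/k`, and `e₀ʲ = (∑_{i=1}^{j} α^{i/k}, j/k)` while `e₁ʲ = (0, j/k)`.
Hence `e₀ᵏ e₁ˡ` has `ℝ`-component `∑_{i=1}^{k} α^{i/k}`, whereas in `e₁ᵏ e₀ˡ` the factor `e₁ᵏ = (0, 1)`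
scales `∑_{i=1}^{l} α^{i/k}` by `α`, giving `∑_{i=k+1}^{k+l} α^{i/k}`; the hypothesis on `α` says
exactly that these agree.
-/

/-- Multiplication of the semidirect product `ℝ ⋊ ℚ` under the action
`u ↦ (x ↦ α^u x)`. -/
noncomputable def sdMul (α : ℝ) (p q : ℝ × ℚ) : ℝ × ℚ :=
  (p.1 + α ^ ((p.2 : ℝ)) * q.1, p.2 + q.2)

/-- `j`-th power with respect to `sdMul` (the identity is `(0, 0)`). -/
noncomputable def sdPow (α : ℝ) (p : ℝ × ℚ) : ℕ → ℝ × ℚ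
  | 0 => (0, 0)
  | j + 1 => sdMul α (sdPow α p j) p

lemma sum_Icc_one_eq_sum_range {M : Type*} [AddCommMonoid M] (f : ℕ → M) (n : ℕ) :
    ∑ i ∈ Finset.Icc 1 n, f i = ∑ i ∈ Finset.range n, f (i + 1) := by
  rw [Finset.range_eq_Ico, Finset.sum_Ico_add', Finset.Ico_add_one_right_eq_Icc]

lemma sum_Icc_add_right {M : Type*} [AddCommMonoid M] (f : ℕ → M) (a b c : ℕ) :
    ∑ i ∈ Finset.Icc (a + c) (b + c), f i = ∑ i ∈ Finset.Icc a b, f (i + c) := by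
  rw [← Finset.image_add_right_Icc, Finset.sum_image fun _ _ _ _ => Nat.add_right_cancel]

lemma sdPow_mk (α x : ℝ) (u : ℚ) (j : ℕ) :
    sdPow α (x, u) j = (∑ i ∈ Finset.range j, α ^ ((i : ℝ) * u) * x, j * u) := by
  induction j with
  | zero => simp [sdPow]
  | succ j ih =>
    rw [sdPow, ih, sdMul, Finset.sum_range_succ, Rat.cast_mul, Rat.cast_natCast]
    ext <;> push_cast <;> ring

lemma sdPow_zero_mk (α : ℝ) (u : ℚ) (j : ℕ) : sdPow α (0, u) j = (0, j * u) := by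
  simp [sdPow_mk]

lemma sdPow_rpow_one_div_mk {α : ℝ} (hα : 0 < α) (n j : ℕ) :
    sdPow α (α ^ (1 / (n : ℝ)), 1 / (n : ℚ)) j
      = (∑ i ∈ Finset.Icc 1 j, α ^ ((i : ℝ) / n), (j : ℚ) * (1 / n)) := by
  rw [sdPow_mk, sum_Icc_one_eq_sum_range]
  congr 1
  refine Finset.sum_congr rfl fun i _ => ?_
  rw [← Real.rpow_add hα]
  push_cast
  ring_nf

lemma rpow_mul_sum_Icc_div {α : ℝ} (hα : 0 < α) {k : ℕ} (hk : k ≠ 0) (l : ℕ) :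
    α * ∑ i ∈ Finset.Icc 1 l, α ^ ((i : ℝ) / k)
      = ∑ i ∈ Finset.Icc (k + 1) (k + l), α ^ ((i : ℝ) / k) := by
  rw [add_comm k 1, add_comm k l, sum_Icc_add_right, Finset.mul_sum]
  refine Finset.sum_congr rfl fun i _ => ?_
  rw [mul_comm, ← Real.rpow_add_one hα.ne']
  push_cast
  field_simp

theorem generators_relation_general
    (k l : ℕ) (hk : 0 < k) (α : ℝ) (hα : 0 < α)
    (hroot : ∑ i ∈ Finset.Icc (k + 1) (k + l), α ^ ((i : ℝ) / (k : ℝ))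
              = ∑ i ∈ Finset.Icc 1 k, α ^ ((i : ℝ) / (k : ℝ))) :
    sdMul α (sdPow α (α ^ (1 / (k : ℝ)), 1 / (k : ℚ)) k)
            (sdPow α ((0 : ℝ), 1 / (k : ℚ)) l)
      = sdMul α (sdPow α ((0 : ℝ), 1 / (k : ℚ)) k)
                (sdPow α (α ^ (1 / (k : ℝ)), 1 / (k : ℚ)) l) := by
  have hk_one : (k : ℚ) * (1 / k) = 1 := mul_one_div_cancel (by positivity)
  simp only [sdPow_rpow_one_div_mk hα, sdPow_zero_mk, sdMul, hk_one, Rat.cast_one, Real.rpow_one,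
    mul_zero, add_zero, zero_add]
  rw [rpow_mul_sum_Icc_div hα hk.ne', hroot]

theorem generators_relation
    (k l : ℕ) (hk : 0 < k) (hl : k ≤ l) (α : ℝ) (hα : 0 < α)
    (hroot : ∑ i ∈ Finset.Icc (k + 1) (k + l), α ^ ((i : ℝ) / (k : ℝ))
              = ∑ i ∈ Finset.Icc 1 k, α ^ ((i : ℝ) / (k : ℝ))) :
    sdMul α (sdPow α (α ^ (1 / (k : ℝ)), 1 / (k : ℚ)) k)
            (sdPow α ((0 : ℝ), 1 / (k : ℚ)) l)
      = sdMul α (sdPow α ((0 : ℝ), 1 / (k : ℚ)) k)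
                (sdPow α (α ^ (1 / (k : ℝ)), 1 / (k : ℚ)) l) :=
  generators_relation_general k l hk α hα hroot
end

section
/- Let k and l be positive integers. There exist a linearly orderable group G (written multiplicatively) and a 2-element subset X of G such that |X^{·k} X^{·l}| = 3 = 3|X| − 3, where X^{·k} X^{·l} = {x^k y^l : x, y ∈ X}. -/
/-!
Work in the group of affine maps `t ↦ q * t + a` of `ℝ` with `q > 0`, ordered
lexicographically by `(q, a)`; this order is bi-invariant. For `x_a : t ↦ q * t + a`,
`x_a ^ k * x_b ^ l : t ↦ q ^ (k + l) * t + a [k]_q + b q ^ k [l]_q`, where `[n]_q = ∑_{i<n} q ^ i`.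
By the intermediate value theorem there is `q > 0` with `q ^ k [l]_q = [k]_q`, and then this
product only depends on `a + b`. Hence for `X = {x_0, x_1}` the set `X^{·k} X^{·l}` is a copy of
`{0, 1} + {0, 1} = {0, 1, 2}`.
-/

open Finset
open scoped Pointwise

/-- The affine map `t ↦ scale * t + shift`; multiplication is composition. -/
@[ext]
structure PosAffine (K : Type*) [Field K] [LinearOrder K] [IsStrictOrderedRing K] where
  shift : K
  scale : K
  scale_pos : 0 < scale

namespace PosAffine

variable {K : Type*} [Field K] [LinearOrder K] [IsStrictOrderedRing K]

instance : Mul (PosAffine K) :=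
  ⟨fun g h =>
    ⟨g.shift + g.scale * h.shift, g.scale * h.scale, mul_pos g.scale_pos h.scale_pos⟩⟩

instance : One (PosAffine K) := ⟨⟨0, 1, one_pos⟩⟩

instance : Inv (PosAffine K) :=
  ⟨fun g => ⟨-(g.shift / g.scale), g.scale⁻¹, inv_pos.2 g.scale_pos⟩⟩

@[simp] theorem shift_mul (g h : PosAffine K) : (g * h).shift = g.shift + g.scale * h.shift := rfl
@[simp] theorem scale_mul (g h : PosAffine K) : (g * h).scale = g.scale * h.scale := rfl
@[simp] theorem shift_one : (1 : PosAffine K).shift = 0 := rfl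
@[simp] theorem scale_one : (1 : PosAffine K).scale = 1 := rfl
@[simp] theorem shift_inv (g : PosAffine K) : g⁻¹.shift = -(g.shift / g.scale) := rfl
@[simp] theorem scale_inv (g : PosAffine K) : g⁻¹.scale = g.scale⁻¹ := rfl

instance : Group (PosAffine K) where
  mul_assoc _ _ _ := by ext <;> simp <;> ring
  one_mul _ := by ext <;> simp
  mul_one _ := by ext <;> simp
  inv_mul_cancel g := by
    ext
    · simp [div_eq_inv_mul]
    · simp [g.scale_pos.ne']

@[simp] theorem scale_pow (g : PosAffine K) (n : ℕ) : (g ^ n).scale = g.scale ^ n := by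
  induction n with
  | zero => simp
  | succ n ih => simp [pow_succ, ih]

@[simp] theorem shift_pow (g : PosAffine K) (n : ℕ) :
    (g ^ n).shift = g.shift * ∑ i ∈ range n, g.scale ^ i := by
  induction n with
  | zero => simp
  | succ n ih => simp only [pow_succ', shift_mul, ih, geom_sum_succ]; ring

instance : LinearOrder (PosAffine K) :=
  LinearOrder.lift' (fun g => toLex (g.scale, g.shift)) fun g h hgh => by
    simp only [toLex_inj, Prod.mk.injEq] at hgh
    ext <;> simp [hgh]

theorem lt_iff {g h : PosAffine K} :
    g < h ↔ g.scale < h.scale ∨ g.scale = h.scale ∧ g.shift < h.shift :=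
  Prod.Lex.toLex_lt_toLex

instance : MulLeftStrictMono (PosAffine K) where
  elim g h₁ h₂ h := by
    simp only [lt_iff, scale_mul, shift_mul] at h ⊢
    rcases h with h | ⟨hs, h⟩
    · exact .inl (mul_lt_mul_of_pos_left h g.scale_pos)
    · exact .inr ⟨hs ▸ rfl, (add_lt_add_iff_left _).2 (mul_lt_mul_of_pos_left h g.scale_pos)⟩

instance : MulRightStrictMono (PosAffine K) where
  elim g h₁ h₂ h := by
    simp only [lt_iff, scale_mul, shift_mul] at h ⊢
    rcases h with h | ⟨hs, h⟩
    · exact .inl (mul_lt_mul_of_pos_right h g.scale_pos)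
    · exact .inr ⟨hs ▸ rfl, by rw [hs]; exact (add_lt_add_iff_right _).2 h⟩

theorem mk_pow_mul_mk_pow {q : K} (hq : 0 < q) {k l : ℕ}
    (hkl : q ^ k * ∑ i ∈ range l, q ^ i = ∑ i ∈ range k, q ^ i) (a b : K) :
    (⟨a, q, hq⟩ : PosAffine K) ^ k * ⟨b, q, hq⟩ ^ l =
      ⟨(a + b) * ∑ i ∈ range k, q ^ i, q ^ (k + l), pow_pos hq _⟩ := by
  ext
  · simp only [shift_mul, shift_pow, scale_pow, ← hkl]; ring
  · simp [pow_add]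

theorem card_image₂_pow_mul_pow [DecidableEq (PosAffine K)] [DecidableEq K] {q : K} (hq : 0 < q)
    {k l : ℕ} (hk : 0 < k) (hkl : q ^ k * ∑ i ∈ range l, q ^ i = ∑ i ∈ range k, q ^ i)
    (s : Finset K) :
    (image₂ (fun x y => x ^ k * y ^ l) (s.image (PosAffine.mk · q hq))
      (s.image (PosAffine.mk · q hq))).card = (s + s).card := by
  have hsum : (0 : K) < ∑ i ∈ range k, q ^ i :=
    sum_pos (fun i _ => pow_pos hq i) (nonempty_range_iff.2 hk.ne')
  rw [image₂_image_left, image₂_image_right]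
  simp only [mk_pow_mul_mk_pow hq hkl]
  rw [← image_image₂ (· + ·)
    fun c => (⟨c * ∑ i ∈ range k, q ^ i, q ^ (k + l), pow_pos hq _⟩ : PosAffine K)]
  refine card_image_of_injective _ fun c d h => ?_
  exact mul_right_cancel₀ hsum.ne' (congrArg shift h)

end PosAffine

theorem exists_pos_pow_mul_geom_sum_eq {k l : ℕ} (hk : 0 < k) (hl : 0 < l) :
    ∃ q : ℝ, 0 < q ∧ q ^ k * ∑ i ∈ range l, q ^ i = ∑ i ∈ range k, q ^ i := by
  set f : ℝ → ℝ := fun t => t ^ k * ∑ i ∈ range l, t ^ i - ∑ i ∈ range k, t ^ i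
  have hf0 : f 0 = -1 := by simp [f, hk.ne']
  have hf2 : 0 ≤ f 2 := by
    have hl2 : (1 : ℝ) ≤ ∑ i ∈ range l, (2 : ℝ) ^ i := by
      simpa using single_le_sum (fun i _ => by positivity) (mem_range.2 hl)
        (f := fun i => (2 : ℝ) ^ i)
    have hk2 : ∑ i ∈ range k, (2 : ℝ) ^ i = 2 ^ k - 1 := by
      rw [geom_sum_eq (by norm_num)]; norm_num
    simp only [f, hk2]
    nlinarith [pow_pos (two_pos : (0 : ℝ) < 2) k]
  obtain ⟨q, hq, hfq⟩ := intermediate_value_Icc zero_le_two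
    (by fun_prop : Continuous f).continuousOn ⟨hf0.le.trans (by norm_num), hf2⟩
  refine ⟨q, hq.1.lt_of_ne ?_, sub_eq_zero.1 hfq⟩
  rintro rfl
  norm_num [hf0] at hfq

theorem exists_linearly_orderable_group_two_element_set
    (k l : ℕ) (hk : 0 < k) (hl : 0 < l) :
    ∃ (G : Type) (_ : Group G) (_ : DecidableEq G) (lo : LinearOrder G),
      (∀ x y z : G, lo.lt y z → lo.lt (x * y) (x * z)) ∧
      (∀ x y z : G, lo.lt y z → lo.lt (y * x) (z * x)) ∧
      ∃ X : Finset G, X.card = 2 ∧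
        (Finset.image₂ (fun x y => x ^ k * y ^ l) X X).card = 3 := by
  classical
  obtain ⟨q, hq, hkl⟩ := exists_pos_pow_mul_geom_sum_eq hk hl
  have hinj : Function.Injective (PosAffine.mk · q hq) := fun _ _ h => congrArg PosAffine.shift h
  refine ⟨PosAffine ℝ, inferInstance, inferInstance, inferInstance,
    fun x _ _ h => mul_lt_mul_right h x, fun x _ _ h => mul_lt_mul_left h x,
    ({0, 1} : Finset ℝ).image (PosAffine.mk · q hq), ?_, ?_⟩
  · rw [card_image_of_injective _ hinj]
    norm_num
  · rw [PosAffine.card_image₂_pow_mul_pow hq hk hkl]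
    change (image₂ (· + ·) _ _).card = 3
    norm_num
end

section
/- Let k and l be positive integers. There exist a linearly orderable group G and a 3-element subset X of G such that |X^{·k} X^{·l}| = 6 = 3|X| − 3. -/
/-!
In `G = ℝ² ⋊ ℤ`, with `n ∈ ℤ` acting on `ℝ²` by the dilation `b ^ n` for some `b > 0`, the
lexicographic order on `(n, p, q)` is bi-invariant, because the action is by positive scalars.
For `x = (u, 1)` and `y = (v, 1)` one computes `x ^ k * y ^ l = (S_k u + b ^ k S_l v, k + l)`
with `S_m = 1 + b + ⋯ + b ^ (m - 1)`. Choosing `b` as a positive root of `b ^ k S_l = S_k`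
makes this `S_k (u + v)`, so for `X = {(u, 1) : u ∈ {0, e₁, e₂}}` the set `X^{·k} X^{·l}` is a
dilate of the sumset `{0, e₁, e₂} + {0, e₁, e₂}`, which has six elements.
-/

open Finset
open scoped Pointwise

namespace Prod.Lex

variable {α β γ δ : Type*} [Preorder α] [Preorder β] [Preorder γ] [Preorder δ]

theorem strictMono_map {f : α → γ} (hf : StrictMono f) {g : α → β → δ}
    (hg : ∀ a, StrictMono (g a)) :
    StrictMono fun x : α ×ₗ β => toLex (f (ofLex x).1, g (ofLex x).1 (ofLex x).2) := by
  intro x y h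
  obtain h | ⟨h₁, h₂⟩ := Prod.Lex.lt_iff.1 h
  · exact Prod.Lex.lt_iff.2 (Or.inl (hf h))
  · refine Prod.Lex.lt_iff.2 (Or.inr ⟨congrArg f h₁, ?_⟩)
    simp only [ofLex_toLex, h₁]
    exact hg _ h₂

end Prod.Lex

theorem exists_pos_pow_mul_geom_sum_eq_geom_sum {k l : ℕ} (hk : 0 < k) (hl : 0 < l) :
    ∃ b : ℝ, 0 < b ∧ b ^ k * ∑ j ∈ range l, b ^ j = ∑ j ∈ range k, b ^ j := by
  let f : ℝ → ℝ := fun x => x ^ k * ∑ j ∈ range l, x ^ j - ∑ j ∈ range k, x ^ j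
  have hf0 : f 0 < 0 := by simp [f, zero_pow hk.ne', zero_geom_sum, hk.ne']
  have hf2 : 0 < f 2 := by
    have h_sum_k : ∑ j ∈ range k, (2 : ℝ) ^ j = 2 ^ k - 1 := by
      simpa [show (2 : ℝ) - 1 = 1 by norm_num] using
        geom_sum_mul_of_one_le (one_le_two : (1 : ℝ) ≤ 2) k
    have h_sum_l : 1 ≤ ∑ j ∈ range l, (2 : ℝ) ^ j :=
      single_le_sum (f := fun j => (2 : ℝ) ^ j) (fun j _ => by positivity) (mem_range.2 hl)
    have h_prod : (2 : ℝ) ^ k ≤ 2 ^ k * ∑ j ∈ range l, (2 : ℝ) ^ j :=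
      le_mul_of_one_le_right (by positivity) h_sum_l
    simp only [f, h_sum_k]
    linarith
  obtain ⟨b, hb, hfb⟩ :=
    intermediate_value_Ioo zero_le_two (by fun_prop : Continuous f).continuousOn ⟨hf0, hf2⟩
  exact ⟨b, hb.1, sub_eq_zero.1 hfb⟩

@[ext]
structure DilationSemidirect (b : ℝ) : Type where
  p : ℝ
  q : ℝ
  n : ℤ

noncomputable section

namespace DilationSemidirect

variable {b : ℝ}

instance : Mul (DilationSemidirect b) :=
  ⟨fun x y => ⟨x.p + b ^ x.n * y.p, x.q + b ^ x.n * y.q, x.n + y.n⟩⟩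

instance : One (DilationSemidirect b) := ⟨⟨0, 0, 0⟩⟩

instance : Inv (DilationSemidirect b) :=
  ⟨fun x => ⟨-(b ^ (-x.n) * x.p), -(b ^ (-x.n) * x.q), -x.n⟩⟩

theorem mul_def (x y : DilationSemidirect b) :
    x * y = ⟨x.p + b ^ x.n * y.p, x.q + b ^ x.n * y.q, x.n + y.n⟩ := rfl

theorem one_def : (1 : DilationSemidirect b) = ⟨0, 0, 0⟩ := rfl

theorem inv_def (x : DilationSemidirect b) :
    x⁻¹ = ⟨-(b ^ (-x.n) * x.p), -(b ^ (-x.n) * x.q), -x.n⟩ := rfl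

instance [Fact (b ≠ 0)] : Group (DilationSemidirect b) where
  mul_assoc x y z := by
    have hb : b ≠ 0 := Fact.out
    ext <;> simp only [mul_def, zpow_add₀ hb] <;> ring
  one_mul x := by ext <;> simp [mul_def, one_def]
  mul_one x := by ext <;> simp [mul_def, one_def]
  inv_mul_cancel x := by
    ext <;> simp [mul_def, one_def, inv_def, zpow_neg]

def toLexCoords (x : DilationSemidirect b) : ℤ ×ₗ ℝ ×ₗ ℝ := toLex (x.n, toLex (x.p, x.q))

theorem toLexCoords_injective : Function.Injective (toLexCoords : DilationSemidirect b → _) := by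
  intro x y h
  simp only [toLexCoords, toLex_inj, Prod.mk.injEq] at h
  ext <;> simp [h]

instance : LinearOrder (DilationSemidirect b) :=
  LinearOrder.lift' toLexCoords toLexCoords_injective

theorem lt_iff_toLexCoords_lt {x y : DilationSemidirect b} :
    x < y ↔ toLexCoords x < toLexCoords y :=
  Iff.rfl

instance [Fact (0 < b)] : MulLeftStrictMono (DilationSemidirect b) where
  elim x _ _ h := by
    have hc : 0 < b ^ x.n := zpow_pos Fact.out _
    exact Prod.Lex.strictMono_map (β := ℝ ×ₗ ℝ) (strictMono_id.const_add x.n) (fun _ =>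
      Prod.Lex.strictMono_map ((strictMono_mul_left_of_pos hc).const_add x.p)
        fun _ => (strictMono_mul_left_of_pos hc).const_add x.q) (lt_iff_toLexCoords_lt.1 h)

instance : MulRightStrictMono (DilationSemidirect b) where
  elim x _ _ h :=
    Prod.Lex.strictMono_map (β := ℝ ×ₗ ℝ) (strictMono_id.add_const x.n) (fun n =>
      Prod.Lex.strictMono_map (strictMono_id.add_const (b ^ n * x.p))
        fun _ => strictMono_id.add_const (b ^ n * x.q)) (lt_iff_toLexCoords_lt.1 h)

theorem pow_of_n_eq_one [Fact (b ≠ 0)] {x : DilationSemidirect b} (hx : x.n = 1) (m : ℕ) :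
    x ^ m = ⟨x.p * ∑ j ∈ range m, b ^ j, x.q * ∑ j ∈ range m, b ^ j, m⟩ := by
  induction m with
  | zero => ext <;> simp [one_def]
  | succ m ih =>
    rw [pow_succ, ih]
    ext <;> simp only [mul_def, hx, sum_range_succ, zpow_natCast] <;> push_cast <;> ring

theorem pow_mul_pow_of_n_eq_one [Fact (b ≠ 0)] {k l : ℕ}
    (hroot : b ^ k * ∑ j ∈ range l, b ^ j = ∑ j ∈ range k, b ^ j)
    {x y : DilationSemidirect b} (hx : x.n = 1) (hy : y.n = 1) :
    x ^ k * y ^ l = ⟨(∑ j ∈ range k, b ^ j) * (x.p + y.p),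
      (∑ j ∈ range k, b ^ j) * (x.q + y.q), k + l⟩ := by
  rw [pow_of_n_eq_one hx, pow_of_n_eq_one hy, ← hroot]
  ext <;> simp only [mul_def, zpow_natCast] <;> ring

def ofLattice (v : ℤ × ℤ) : DilationSemidirect b := ⟨v.1, v.2, 1⟩

theorem ofLattice_injective : Function.Injective (ofLattice : ℤ × ℤ → DilationSemidirect b) := by
  intro v w h
  simp only [ofLattice, mk.injEq, Int.cast_inj] at h
  exact Prod.ext h.1 h.2.1

theorem card_image₂_pow_mul_pow_ofLattice [Fact (b ≠ 0)] [DecidableEq (DilationSemidirect b)]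
    {k l : ℕ} (hroot : b ^ k * ∑ j ∈ range l, b ^ j = ∑ j ∈ range k, b ^ j)
    (hS : ∑ j ∈ range k, b ^ j ≠ 0) (A : Finset (ℤ × ℤ)) :
    (image₂ (fun x y : DilationSemidirect b => x ^ k * y ^ l) (A.image ofLattice)
      (A.image ofLattice)).card = (A + A).card := by
  set S := ∑ j ∈ range k, b ^ j
  let scale : ℤ × ℤ → DilationSemidirect b := fun v => ⟨S * v.1, S * v.2, k + l⟩
  have h_scale : Function.Injective scale := by
    intro v w h
    simp only [scale, mk.injEq, mul_right_inj' hS, Int.cast_inj] at h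
    exact Prod.ext h.1 h.2.1
  have h_image : image₂ (fun x y => x ^ k * y ^ l) (A.image ofLattice) (A.image ofLattice) =
      (A + A).image scale := by
    rw [image₂_image_left, image₂_image_right, show A + A = image₂ (· + ·) A A from rfl,
      image_image₂]
    refine image₂_congr fun v _ w _ => ?_
    rw [pow_mul_pow_of_n_eq_one hroot rfl rfl]
    ext <;> simp [scale, ofLattice, S]
  rw [h_image, card_image_of_injective _ h_scale]

end DilationSemidirect

end

open DilationSemidirect in
theorem exists_linearly_orderable_group_three_element_set
    (k l : ℕ) (hk : 0 < k) (hl : 0 < l) :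
    ∃ (G : Type) (_ : Group G) (_ : DecidableEq G) (lo : LinearOrder G),
      (∀ x y z : G, lo.lt y z → lo.lt (x * y) (x * z)) ∧
      (∀ x y z : G, lo.lt y z → lo.lt (y * x) (z * x)) ∧
      ∃ X : Finset G, X.card = 3 ∧
        (Finset.image₂ (fun x y => x ^ k * y ^ l) X X).card = 6 := by
  obtain ⟨b, hb, hroot⟩ := exists_pos_pow_mul_geom_sum_eq_geom_sum hk hl
  have : Fact (0 < b) := ⟨hb⟩
  have : Fact (b ≠ 0) := ⟨hb.ne'⟩
  have hS : ∑ j ∈ range k, b ^ j ≠ 0 :=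
    (sum_pos (fun j _ => pow_pos hb j) (nonempty_range_iff.2 hk.ne')).ne'
  classical
  let A : Finset (ℤ × ℤ) := {(0, 0), (1, 0), (0, 1)}
  refine ⟨DilationSemidirect b, inferInstance, inferInstance, inferInstance,
    fun x _ _ h => mul_lt_mul_right h x, fun x _ _ h => mul_lt_mul_left h x,
    A.image ofLattice, ?_, ?_⟩
  · rw [card_image_of_injective _ ofLattice_injective]
    decide
  · rw [card_image₂_pow_mul_pow_ofLattice hroot hS]
    decide
end
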